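/- There exists C > 0 such that for all η = (η₁,η₂,η₃) ∈ ℝ³ with η ≠ 0 and 3η₁² ≠ η₂²+η₃², and for each j = 1, 2, 3: |A_j(η)| ≤ C (η₁²+η₂²+η₃²)^{3/2}(3η₁²−η₂²−η₃²)^{−2}, and |∂_{η_j}A_j(η)| ≤ C [ (η₁²+η₂²+η₃²)(3η₁²−η₂²−η₃²)^{−2} + (η₁²+η₂²+η₃²)² |3η₁²−η₂²−η₃²|^{−3} ]. -/

import Mathlib

noncomputable section

/-- p(η) = (η₁²+η₂²+η₃²)(3η₁²−η₂²−η₃²)². -/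
def pZK (η₁ η₂ η₃ : ℝ) : ℝ :=
  (η₁ ^ 2 + η₂ ^ 2 + η₃ ^ 2) * (3 * η₁ ^ 2 - η₂ ^ 2 - η₃ ^ 2) ^ 2

def A0ZK (η₁ η₂ η₃ : ℝ) : ℝ :=
  (9 * η₁ ^ 4 + 30 * η₁ ^ 2 * (η₂ ^ 2 + η₃ ^ 2) + 5 * (η₂ ^ 2 + η₃ ^ 2) ^ 2)
    / (3 * pZK η₁ η₂ η₃)

def A1ZK (η₁ η₂ η₃ : ℝ) : ℝ :=
  -(η₁ * (9 * η₁ ^ 4 + 18 * η₁ ^ 2 * (η₂ ^ 2 + η₃ ^ 2) + (η₂ ^ 2 + η₃ ^ 2) ^ 2))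
    / (3 * pZK η₁ η₂ η₃)

def A2ZK (η₁ η₂ η₃ : ℝ) : ℝ :=
  -(4 * η₂ * (η₂ ^ 2 + η₃ ^ 2) * (3 * η₁ ^ 2 + η₂ ^ 2 + η₃ ^ 2)) / (3 * pZK η₁ η₂ η₃)

def A3ZK (η₁ η₂ η₃ : ℝ) : ℝ :=
  -(4 * η₃ * (η₂ ^ 2 + η₃ ^ 2) * (3 * η₁ ^ 2 + η₂ ^ 2 + η₃ ^ 2)) / (3 * pZK η₁ η₂ η₃)

def B01ZK (η₁ η₂ η₃ : ℝ) : ℝ := -(4 * η₁ * (η₂ ^ 2 + η₃ ^ 2)) / pZK η₁ η₂ η₃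

def B02ZK (η₁ η₂ η₃ : ℝ) : ℝ :=
  -(2 * η₂ * (3 * η₁ ^ 2 + η₂ ^ 2 + η₃ ^ 2)) / (3 * pZK η₁ η₂ η₃)

def B03ZK (η₁ η₂ η₃ : ℝ) : ℝ :=
  -(2 * η₃ * (3 * η₁ ^ 2 + η₂ ^ 2 + η₃ ^ 2)) / (3 * pZK η₁ η₂ η₃)

def B11ZK (η₁ η₂ η₃ : ℝ) : ℝ := 4 * η₁ ^ 2 * (η₂ ^ 2 + η₃ ^ 2) / pZK η₁ η₂ η₃

def B12ZK (η₁ η₂ η₃ : ℝ) : ℝ :=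
  2 * η₁ * η₂ * (3 * η₁ ^ 2 + η₂ ^ 2 + η₃ ^ 2) / (3 * pZK η₁ η₂ η₃)

def B13ZK (η₁ η₂ η₃ : ℝ) : ℝ :=
  2 * η₁ * η₃ * (3 * η₁ ^ 2 + η₂ ^ 2 + η₃ ^ 2) / (3 * pZK η₁ η₂ η₃)

def B21ZK (η₁ η₂ η₃ : ℝ) : ℝ := 4 * η₁ * η₂ * (η₂ ^ 2 + η₃ ^ 2) / pZK η₁ η₂ η₃

def B31ZK (η₁ η₂ η₃ : ℝ) : ℝ := 4 * η₁ * η₃ * (η₂ ^ 2 + η₃ ^ 2) / pZK η₁ η₂ η₃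

def B22ZK (η₁ η₂ η₃ : ℝ) : ℝ :=
  2 * (η₂ ^ 2 + η₃ ^ 2) * (3 * η₁ ^ 2 + η₂ ^ 2 + η₃ ^ 2) / (3 * pZK η₁ η₂ η₃)

def B32ZK (η₁ η₂ η₃ : ℝ) : ℝ :=
  2 * (η₂ ^ 2 + η₃ ^ 2) * (3 * η₁ ^ 2 + η₂ ^ 2 + η₃ ^ 2) / (3 * pZK η₁ η₂ η₃)

def C21ZK (η₁ η₂ η₃ : ℝ) : ℝ :=
  -(2 * η₃ * (3 * η₁ ^ 2 + η₂ ^ 2 + η₃ ^ 2)) / (3 * pZK η₁ η₂ η₃)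

def C31ZK (η₁ η₂ η₃ : ℝ) : ℝ :=
  -(2 * η₂ * (3 * η₁ ^ 2 + η₂ ^ 2 + η₃ ^ 2)) / (3 * pZK η₁ η₂ η₃)

def C22ZK (η₁ η₂ η₃ : ℝ) : ℝ :=
  2 * η₂ * (3 * η₁ ^ 2 + η₂ ^ 2 + η₃ ^ 2) / (3 * pZK η₁ η₂ η₃)

def C32ZK (η₁ η₂ η₃ : ℝ) : ℝ :=
  2 * η₃ * (3 * η₁ ^ 2 + η₂ ^ 2 + η₃ ^ 2) / (3 * pZK η₁ η₂ η₃)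

/-!
With `r = η₁² + η₂² + η₃²` and `q = 3η₁² - η₂² - η₃²`, each `A_j` has the form `N / (3 r q²)`,
where `N` is a quintic carrying a factor `η_j`, so `|N| ≤ K √r r²` and `|∂_j N| ≤ K r²`.
The quotient rule writes `∂_j A_j` as `(N' r q - N r' q - 2 N q' r) / (3 r² q³)`, and since
`|r'|, |q'| ≲ √r` the three terms are bounded by `r / q²`, `r / q²` and `r² / |q|³`.
`A₃` is `A₂` with `η₂` and `η₃` exchanged.
-/

theorem Real.rpow_three_div_two {r : ℝ} (hr : 0 ≤ r) : r ^ ((3 : ℝ) / 2) = √r * r := by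
  rw [show (3 : ℝ) / 2 = 1 / 2 + 1 by norm_num, Real.rpow_add' hr (by norm_num), Real.rpow_one,
    Real.sqrt_eq_rpow]

theorem HasDerivAt.div_three_mul_mul_sq {N r q : ℝ → ℝ} {N' r' q' x : ℝ}
    (hN : HasDerivAt N N' x) (hr : HasDerivAt r r' x) (hq : HasDerivAt q q' x)
    (hr0 : r x ≠ 0) (hq0 : q x ≠ 0) :
    HasDerivAt (fun s => N s / (3 * (r s * q s ^ 2)))
      ((N' * r x * q x - N x * r' * q x - 2 * N x * q' * r x) / (3 * r x ^ 2 * q x ^ 3)) x := by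
  have h : HasDerivAt (fun s => N s / (3 * (r s * q s ^ 2))) _ x :=
    hN.div ((hr.mul (hq.pow 2)).const_mul 3)
      (mul_ne_zero three_ne_zero (mul_ne_zero hr0 (pow_ne_zero 2 hq0)))
  refine h.congr_deriv ?_
  simp only [Pi.pow_apply]
  field_simp
  ring

section QuotientBounds

variable {N r q N' r' q' K : ℝ}

theorem abs_div_three_mul_mul_sq_le (hN : |N| ≤ K * √r * r ^ 2) (hr : 0 < r) (hq : q ≠ 0) :
    |N / (3 * (r * q ^ 2))| ≤ K * r ^ ((3 : ℝ) / 2) * (q ^ 2)⁻¹ := by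
  have hK : 0 ≤ K := by
    have : 0 < √r * r ^ 2 := by positivity
    nlinarith [abs_nonneg N]
  have hD : 0 < 3 * (r * q ^ 2) := by positivity
  rw [Real.rpow_three_div_two hr.le, abs_div, abs_of_pos hD, div_le_iff₀ hD]
  have hRHS : K * (√r * r) * (q ^ 2)⁻¹ * (3 * (r * q ^ 2)) = 3 * (K * √r * r ^ 2) := by
    field_simp
  linarith [mul_nonneg hK (mul_nonneg (Real.sqrt_nonneg r) (sq_nonneg r))]

theorem abs_div_three_mul_mul_sq_deriv_le (hr : 0 < r) (hq : q ≠ 0)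
    (hN : |N| ≤ K * √r * r ^ 2) (hN' : |N'| ≤ K * r ^ 2)
    (hr' : |r'| ≤ 2 * √r) (hq' : |q'| ≤ 6 * √r) :
    |(N' * r * q - N * r' * q - 2 * N * q' * r) / (3 * r ^ 2 * q ^ 3)|
      ≤ 4 * K * (r * (q ^ 2)⁻¹ + r ^ 2 * (|q| ^ 3)⁻¹) := by
  have hK : 0 ≤ K := by nlinarith [abs_nonneg N', pow_pos hr 2]
  have hsqrt : √r ^ 2 = r := Real.sq_sqrt hr.le
  have hu : 0 < |q| := abs_pos.2 hq
  have hnum : |N' * r * q - N * r' * q - 2 * N * q' * r|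
      ≤ 3 * K * r ^ 3 * |q| + 12 * K * r ^ 4 := by
    calc |N' * r * q - N * r' * q - 2 * N * q' * r|
        ≤ |N' * r * q| + |N * r' * q| + |2 * N * q' * r| :=
          (abs_sub _ _).trans (add_le_add_left (abs_sub _ _) _)
      _ = |N'| * r * |q| + |N| * |r'| * |q| + 2 * |N| * |q'| * r := by
          simp only [abs_mul, abs_of_pos hr, abs_two]
      _ ≤ K * r ^ 2 * r * |q| + K * √r * r ^ 2 * (2 * √r) * |q|
            + 2 * (K * √r * r ^ 2) * (6 * √r) * r := by
          gcongr
      _ = 3 * K * r ^ 3 * |q| + 12 * K * r ^ 4 := by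
          linear_combination (2 * K * r ^ 2 * |q| + 12 * K * r ^ 3) * hsqrt
  have hD : 0 < 3 * r ^ 2 * |q| ^ 3 := by positivity
  have hDabs : |3 * r ^ 2 * q ^ 3| = 3 * r ^ 2 * |q| ^ 3 := by
    rw [abs_mul, abs_mul, abs_pow, abs_pow, abs_of_pos hr, abs_of_pos three_pos]
  have hRHS : 4 * K * (r * (|q| ^ 2)⁻¹ + r ^ 2 * (|q| ^ 3)⁻¹) * (3 * r ^ 2 * |q| ^ 3)
      = 12 * K * r ^ 3 * |q| + 12 * K * r ^ 4 := by
    field_simp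
    ring
  rw [abs_div, hDabs, div_le_iff₀ hD, ← sq_abs q, hRHS]
  linarith [mul_nonneg (mul_nonneg hK (pow_nonneg hr.le 3)) hu.le]

end QuotientBounds

theorem sum_sq_pos_of_not_all_zero {a b c : ℝ} (h : ¬(a = 0 ∧ b = 0 ∧ c = 0)) :
    0 < a ^ 2 + b ^ 2 + c ^ 2 := by
  rcases not_and_or.1 h with ha | hbc
  · positivity
  rcases not_and_or.1 hbc with hb | hc
  · positivity
  · positivity

section Symbols

variable (a b c : ℝ)

theorem abs_le_sqrt_sum_sq : |a| ≤ √(a ^ 2 + b ^ 2 + c ^ 2) :=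
  Real.abs_le_sqrt (by nlinarith [sq_nonneg b, sq_nonneg c])

theorem abs_le_sqrt_sum_sq' : |b| ≤ √(a ^ 2 + b ^ 2 + c ^ 2) := by
  simpa only [add_comm (b ^ 2), add_left_comm (b ^ 2)] using abs_le_sqrt_sum_sq b a c

theorem abs_A1ZK_num_le :
    |-(a * (9 * a ^ 4 + 18 * a ^ 2 * (b ^ 2 + c ^ 2) + (b ^ 2 + c ^ 2) ^ 2))|
      ≤ 54 * √(a ^ 2 + b ^ 2 + c ^ 2) * (a ^ 2 + b ^ 2 + c ^ 2) ^ 2 := by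
  have hP : 0 ≤ 9 * a ^ 4 + 18 * a ^ 2 * (b ^ 2 + c ^ 2) + (b ^ 2 + c ^ 2) ^ 2 := by positivity
  rw [abs_neg, abs_mul, abs_of_nonneg hP]
  calc _ ≤ √(a ^ 2 + b ^ 2 + c ^ 2) * (9 * (a ^ 2 + b ^ 2 + c ^ 2) ^ 2) :=
        mul_le_mul (abs_le_sqrt_sum_sq a b c) (by nlinarith [sq_nonneg (b ^ 2 + c ^ 2)]) hP
          (Real.sqrt_nonneg _)
    _ ≤ 54 * √(a ^ 2 + b ^ 2 + c ^ 2) * (a ^ 2 + b ^ 2 + c ^ 2) ^ 2 := by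
        nlinarith [mul_nonneg (Real.sqrt_nonneg (a ^ 2 + b ^ 2 + c ^ 2))
          (sq_nonneg (a ^ 2 + b ^ 2 + c ^ 2))]

theorem abs_A2ZK_num_le :
    |-(4 * b * (b ^ 2 + c ^ 2) * (3 * a ^ 2 + b ^ 2 + c ^ 2))|
      ≤ 54 * √(a ^ 2 + b ^ 2 + c ^ 2) * (a ^ 2 + b ^ 2 + c ^ 2) ^ 2 := by
  rw [abs_neg, abs_mul, abs_mul, abs_mul, abs_of_nonneg (by positivity : (0 : ℝ) ≤ b ^ 2 + c ^ 2),
    abs_of_nonneg (by positivity : (0 : ℝ) ≤ 3 * a ^ 2 + b ^ 2 + c ^ 2),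
    abs_of_pos (by norm_num : (0 : ℝ) < 4)]
  calc _ ≤ 4 * √(a ^ 2 + b ^ 2 + c ^ 2) * (a ^ 2 + b ^ 2 + c ^ 2)
        * (3 * (a ^ 2 + b ^ 2 + c ^ 2)) := by
        gcongr
        · exact abs_le_sqrt_sum_sq' a b c
        all_goals nlinarith [sq_nonneg a]
    _ ≤ 54 * √(a ^ 2 + b ^ 2 + c ^ 2) * (a ^ 2 + b ^ 2 + c ^ 2) ^ 2 := by
        nlinarith [mul_nonneg (Real.sqrt_nonneg (a ^ 2 + b ^ 2 + c ^ 2))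
          (sq_nonneg (a ^ 2 + b ^ 2 + c ^ 2))]

variable {a b c}

theorem abs_A1ZK_le (hr : 0 < a ^ 2 + b ^ 2 + c ^ 2) (hq : 3 * a ^ 2 - b ^ 2 - c ^ 2 ≠ 0) :
    |A1ZK a b c|
      ≤ 54 * (a ^ 2 + b ^ 2 + c ^ 2) ^ ((3 : ℝ) / 2) * ((3 * a ^ 2 - b ^ 2 - c ^ 2) ^ 2)⁻¹ :=
  abs_div_three_mul_mul_sq_le (abs_A1ZK_num_le a b c) hr hq

theorem abs_A2ZK_le (hr : 0 < a ^ 2 + b ^ 2 + c ^ 2) (hq : 3 * a ^ 2 - b ^ 2 - c ^ 2 ≠ 0) :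
    |A2ZK a b c|
      ≤ 54 * (a ^ 2 + b ^ 2 + c ^ 2) ^ ((3 : ℝ) / 2) * ((3 * a ^ 2 - b ^ 2 - c ^ 2) ^ 2)⁻¹ :=
  abs_div_three_mul_mul_sq_le (abs_A2ZK_num_le a b c) hr hq

theorem abs_deriv_A1ZK_le (hr : 0 < a ^ 2 + b ^ 2 + c ^ 2) (hq : 3 * a ^ 2 - b ^ 2 - c ^ 2 ≠ 0) :
    |deriv (fun s => A1ZK s b c) a|
      ≤ 216 * ((a ^ 2 + b ^ 2 + c ^ 2) * ((3 * a ^ 2 - b ^ 2 - c ^ 2) ^ 2)⁻¹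
        + (a ^ 2 + b ^ 2 + c ^ 2) ^ 2 * (|3 * a ^ 2 - b ^ 2 - c ^ 2| ^ 3)⁻¹) := by
  have hN : HasDerivAt
      (fun s => -(s * (9 * s ^ 4 + 18 * s ^ 2 * (b ^ 2 + c ^ 2) + (b ^ 2 + c ^ 2) ^ 2)))
      (-(45 * a ^ 4 + 54 * a ^ 2 * (b ^ 2 + c ^ 2) + (b ^ 2 + c ^ 2) ^ 2)) a :=
    ((hasDerivAt_id' a).mul ((((hasDerivAt_pow 4 a).const_mul 9).add
      (((hasDerivAt_pow 2 a).const_mul 18).mul_const (b ^ 2 + c ^ 2))).add_const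
        ((b ^ 2 + c ^ 2) ^ 2))).neg.congr_deriv (by norm_num; ring)
  have hr' : HasDerivAt (fun s => s ^ 2 + b ^ 2 + c ^ 2) (2 * a) a :=
    (((hasDerivAt_pow 2 a).add_const (b ^ 2)).add_const (c ^ 2)).congr_deriv (by norm_num)
  have hq' : HasDerivAt (fun s => 3 * s ^ 2 - b ^ 2 - c ^ 2) (6 * a) a :=
    ((((hasDerivAt_pow 2 a).const_mul 3).sub_const (b ^ 2)).sub_const (c ^ 2)).congr_deriv
      (by norm_num; ring)
  have h : HasDerivAt (fun s => A1ZK s b c) _ a := hN.div_three_mul_mul_sq hr' hq' hr.ne' hq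
  rw [h.deriv]
  refine (abs_div_three_mul_mul_sq_deriv_le hr hq (abs_A1ZK_num_le a b c) ?_ ?_ ?_).trans_eq
    (by norm_num)
  · rw [abs_neg, abs_of_nonneg (by positivity)]
    nlinarith [sq_nonneg (b ^ 2 + c ^ 2), mul_nonneg (sq_nonneg a) (sq_nonneg (b ^ 2 + c ^ 2))]
  · rw [abs_mul, abs_two]
    gcongr
    exact abs_le_sqrt_sum_sq a b c
  · rw [abs_mul, abs_of_pos (by norm_num : (0 : ℝ) < 6)]
    gcongr
    exact abs_le_sqrt_sum_sq a b c

theorem abs_deriv_A2ZK_le (hr : 0 < a ^ 2 + b ^ 2 + c ^ 2) (hq : 3 * a ^ 2 - b ^ 2 - c ^ 2 ≠ 0) :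
    |deriv (fun s => A2ZK a s c) b|
      ≤ 216 * ((a ^ 2 + b ^ 2 + c ^ 2) * ((3 * a ^ 2 - b ^ 2 - c ^ 2) ^ 2)⁻¹
        + (a ^ 2 + b ^ 2 + c ^ 2) ^ 2 * (|3 * a ^ 2 - b ^ 2 - c ^ 2| ^ 3)⁻¹) := by
  have hN : HasDerivAt (fun s => -(4 * s * (s ^ 2 + c ^ 2) * (3 * a ^ 2 + s ^ 2 + c ^ 2)))
      (-(4 * (3 * b ^ 2 + c ^ 2) * (3 * a ^ 2 + b ^ 2 + c ^ 2) + 8 * b ^ 2 * (b ^ 2 + c ^ 2))) b :=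
    ((((hasDerivAt_id' b).const_mul 4).mul ((hasDerivAt_pow 2 b).add_const (c ^ 2))).mul
      (((hasDerivAt_pow 2 b).const_add (3 * a ^ 2)).add_const (c ^ 2))).neg.congr_deriv
        (by norm_num; ring)
  have hr' : HasDerivAt (fun s => a ^ 2 + s ^ 2 + c ^ 2) (2 * b) b :=
    (((hasDerivAt_pow 2 b).const_add (a ^ 2)).add_const (c ^ 2)).congr_deriv (by norm_num)
  have hq' : HasDerivAt (fun s => 3 * a ^ 2 - s ^ 2 - c ^ 2) (-(2 * b)) b :=
    (((hasDerivAt_pow 2 b).const_sub (3 * a ^ 2)).sub_const (c ^ 2)).congr_deriv (by norm_num)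
  have h : HasDerivAt (fun s => A2ZK a s c) _ b := hN.div_three_mul_mul_sq hr' hq' hr.ne' hq
  rw [h.deriv]
  have hb := abs_le_sqrt_sum_sq' a b c
  refine (abs_div_three_mul_mul_sq_deriv_le hr hq (abs_A2ZK_num_le a b c) ?_ ?_ ?_).trans_eq
    (by norm_num)
  · rw [abs_neg, abs_of_nonneg (by positivity)]
    nlinarith [sq_nonneg a, sq_nonneg b, sq_nonneg c, mul_nonneg (sq_nonneg a) (sq_nonneg b),
      mul_nonneg (sq_nonneg a) (sq_nonneg c), mul_nonneg (sq_nonneg b) (sq_nonneg c)]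
  · rw [abs_mul, abs_two]
    gcongr
  · rw [abs_neg, abs_mul, abs_two]
    linarith [abs_nonneg b]

theorem A3ZK_eq_A2ZK : A3ZK a b c = A2ZK a c b := by
  simp only [A3ZK, A2ZK, pZK]
  ring

theorem abs_A3ZK_le (hr : 0 < a ^ 2 + b ^ 2 + c ^ 2) (hq : 3 * a ^ 2 - b ^ 2 - c ^ 2 ≠ 0) :
    |A3ZK a b c|
      ≤ 54 * (a ^ 2 + b ^ 2 + c ^ 2) ^ ((3 : ℝ) / 2) * ((3 * a ^ 2 - b ^ 2 - c ^ 2) ^ 2)⁻¹ := by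
  rw [A3ZK_eq_A2ZK, add_right_comm, sub_right_comm]
  exact abs_A2ZK_le (by linarith) (by rwa [sub_right_comm])

theorem abs_deriv_A3ZK_le (hr : 0 < a ^ 2 + b ^ 2 + c ^ 2) (hq : 3 * a ^ 2 - b ^ 2 - c ^ 2 ≠ 0) :
    |deriv (fun s => A3ZK a b s) c|
      ≤ 216 * ((a ^ 2 + b ^ 2 + c ^ 2) * ((3 * a ^ 2 - b ^ 2 - c ^ 2) ^ 2)⁻¹
        + (a ^ 2 + b ^ 2 + c ^ 2) ^ 2 * (|3 * a ^ 2 - b ^ 2 - c ^ 2| ^ 3)⁻¹) := by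
  simp only [A3ZK_eq_A2ZK]
  rw [add_right_comm, sub_right_comm]
  exact abs_deriv_A2ZK_le (by linarith) (by rwa [sub_right_comm])

end Symbols

/-- Bounds on A_j and on the partial derivatives ∂_{η_j}A_j, j = 1,2,3. -/
theorem Aj_bounds :
    ∃ C > 0, ∀ η₁ η₂ η₃ : ℝ, ¬(η₁ = 0 ∧ η₂ = 0 ∧ η₃ = 0) →
      3 * η₁ ^ 2 ≠ η₂ ^ 2 + η₃ ^ 2 →
      (|A1ZK η₁ η₂ η₃|
          ≤ C * (η₁ ^ 2 + η₂ ^ 2 + η₃ ^ 2) ^ ((3 : ℝ) / 2)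
              * ((3 * η₁ ^ 2 - η₂ ^ 2 - η₃ ^ 2) ^ 2)⁻¹) ∧
      (|A2ZK η₁ η₂ η₃|
          ≤ C * (η₁ ^ 2 + η₂ ^ 2 + η₃ ^ 2) ^ ((3 : ℝ) / 2)
              * ((3 * η₁ ^ 2 - η₂ ^ 2 - η₃ ^ 2) ^ 2)⁻¹) ∧
      (|A3ZK η₁ η₂ η₃|
          ≤ C * (η₁ ^ 2 + η₂ ^ 2 + η₃ ^ 2) ^ ((3 : ℝ) / 2)
              * ((3 * η₁ ^ 2 - η₂ ^ 2 - η₃ ^ 2) ^ 2)⁻¹) ∧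
      (|deriv (fun s => A1ZK s η₂ η₃) η₁|
          ≤ C * ((η₁ ^ 2 + η₂ ^ 2 + η₃ ^ 2) * ((3 * η₁ ^ 2 - η₂ ^ 2 - η₃ ^ 2) ^ 2)⁻¹
              + (η₁ ^ 2 + η₂ ^ 2 + η₃ ^ 2) ^ 2 * (|3 * η₁ ^ 2 - η₂ ^ 2 - η₃ ^ 2| ^ 3)⁻¹)) ∧
      (|deriv (fun s => A2ZK η₁ s η₃) η₂|
          ≤ C * ((η₁ ^ 2 + η₂ ^ 2 + η₃ ^ 2) * ((3 * η₁ ^ 2 - η₂ ^ 2 - η₃ ^ 2) ^ 2)⁻¹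
              + (η₁ ^ 2 + η₂ ^ 2 + η₃ ^ 2) ^ 2 * (|3 * η₁ ^ 2 - η₂ ^ 2 - η₃ ^ 2| ^ 3)⁻¹)) ∧
      (|deriv (fun s => A3ZK η₁ η₂ s) η₃|
          ≤ C * ((η₁ ^ 2 + η₂ ^ 2 + η₃ ^ 2) * ((3 * η₁ ^ 2 - η₂ ^ 2 - η₃ ^ 2) ^ 2)⁻¹
              + (η₁ ^ 2 + η₂ ^ 2 + η₃ ^ 2) ^ 2 * (|3 * η₁ ^ 2 - η₂ ^ 2 - η₃ ^ 2| ^ 3)⁻¹)) := by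
  refine ⟨216, by norm_num, fun η₁ η₂ η₃ hη hη' => ?_⟩
  have hr := sum_sq_pos_of_not_all_zero hη
  have hq : 3 * η₁ ^ 2 - η₂ ^ 2 - η₃ ^ 2 ≠ 0 := fun h => hη' (by linarith)
  have weaken {X : ℝ} (h : X ≤ 54 * (η₁ ^ 2 + η₂ ^ 2 + η₃ ^ 2) ^ ((3 : ℝ) / 2)
      * ((3 * η₁ ^ 2 - η₂ ^ 2 - η₃ ^ 2) ^ 2)⁻¹) :
      X ≤ 216 * (η₁ ^ 2 + η₂ ^ 2 + η₃ ^ 2) ^ ((3 : ℝ) / 2)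
        * ((3 * η₁ ^ 2 - η₂ ^ 2 - η₃ ^ 2) ^ 2)⁻¹ :=
    h.trans (by gcongr; norm_num)
  exact ⟨weaken (abs_A1ZK_le hr hq), weaken (abs_A2ZK_le hr hq), weaken (abs_A3ZK_le hr hq),
    abs_deriv_A1ZK_le hr hq, abs_deriv_A2ZK_le hr hq, abs_deriv_A3ZK_le hr hq⟩
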